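/- arXiv:2005.08088 — 2 statements merged into one kernel-verified Lean document; each statement's English description precedes it below -/
import Mathlib

section
/- sup_{v∈𝒱̄} | Σ_{j=0}^{T−1} μ̃_j(v) | ≤ π·B·U₁. (First bound of Lemma 2 of the paper.) -/
open Complex Real

/-!
The `j`-th term is `b_j / n` times the Dirichlet kernel at `θ_j = j / T - v`. Reducing `θ_j`
modulo `1` to `δ_j ∈ [-1/2, 1/2]`, Jordan's inequality bounds it by
`(π / 2) B |sin (π n δ_j)| / (π n |δ_j|)`. The points `x_j = n δ_j` lie in `g < |x_j| ≤ n / 2`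
(because `v ∉ 𝒱`) and are `2g`-separated (distinct `δ_j` differ by at least `1 / T > 2g / n`), so
on each side of `0` every shell `((2k+1) g, (2k+3) g]` holds at most one of them, and there the
sinc factor is at most `A_{(2k+1) g}`. Summing over both sides gives `2 · (π / 2) · B · U₁`.
-/

/-- `A_m := sup{ |sin(πν)|/(πν) : ν ∈ [m, m+1] }`. -/
noncomputable def sideLobeBound (m : ℕ) : ℝ :=
  ⨆ ν ∈ Set.Icc (m : ℝ) ((m : ℝ) + 1), |Real.sin (Real.pi * ν)| / (Real.pi * ν)

/-- `U₁ := Σ_{j=0}^{⌊(n−2g−1)/(4g)⌋} A_{(2j+1)g}`. -/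
noncomputable def leakageU₁ (n g : ℕ) : ℝ :=
  ∑ j ∈ Finset.Icc (0 : ℤ) ⌊((n : ℝ) - 2 * g - 1) / (4 * g)⌋,
    sideLobeBound ((2 * j + 1).toNat * g)

lemma abs_sin_pi_mul_div_le_one {ν : ℝ} (hν : 0 ≤ ν) : |Real.sin (π * ν)| / (π * ν) ≤ 1 := by
  have hπν : 0 ≤ π * ν := by positivity
  calc |Real.sin (π * ν)| / (π * ν) ≤ |π * ν| / (π * ν) :=
        div_le_div_of_nonneg_right abs_sin_le_abs hπν
    _ ≤ 1 := by rw [abs_of_nonneg hπν]; exact div_self_le_one _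

lemma sideLobeBound_nonneg (m : ℕ) : 0 ≤ sideLobeBound m :=
  Real.iSup_nonneg fun ν => Real.iSup_nonneg fun hν =>
    have : 0 ≤ ν := (Nat.cast_nonneg m).trans hν.1
    by positivity

lemma leakageU₁_nonneg (n g : ℕ) : 0 ≤ leakageU₁ n g :=
  Finset.sum_nonneg fun _ _ => sideLobeBound_nonneg _

lemma le_sideLobeBound {m : ℕ} {ν : ℝ} (hν : ν ∈ Set.Icc (m : ℝ) (m + 1)) :
    |Real.sin (π * ν)| / (π * ν) ≤ sideLobeBound m := by
  have hbdd : BddAbove (Set.range fun ν : ℝ =>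
      ⨆ _ : ν ∈ Set.Icc (m : ℝ) (m + 1), |Real.sin (π * ν)| / (π * ν)) := by
    refine ⟨1, Set.forall_mem_range.2 fun ν => Real.iSup_le (fun hν => ?_) zero_le_one⟩
    exact abs_sin_pi_mul_div_le_one ((Nat.cast_nonneg m).trans hν.1)
  have := le_ciSup hbdd ν
  rw [ciSup_pos hν] at this
  exact this

/-- Shifting `x` down by an integer into `[m, m + 1]` keeps `|sin (π x)|` and shrinks `π x`. -/
lemma abs_sin_pi_mul_div_le_sideLobeBound {m : ℕ} (hm : 0 < m) {x : ℝ} (hx : m ≤ x) :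
    |Real.sin (π * x)| / (π * x) ≤ sideLobeBound m := by
  set N := ⌊x - m⌋₊
  have hN : (N : ℝ) ≤ x - m := Nat.floor_le (sub_nonneg.2 hx)
  have hN' : x - m < N + 1 := Nat.lt_floor_add_one _
  have hm' : (0 : ℝ) < m := by exact_mod_cast hm
  have hsin : |Real.sin (π * x)| = |Real.sin (π * (x - N))| := by
    rw [show π * x = π * (x - N) + N * π by ring, Real.sin_add_nat_mul_pi, abs_mul,
      abs_pow, abs_neg, abs_one, one_pow, one_mul]
  calc |Real.sin (π * x)| / (π * x) ≤ |Real.sin (π * (x - N))| / (π * (x - N)) := by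
        rw [hsin]
        gcongr
        · exact mul_pos pi_pos (by linarith)
        · exact sub_le_self _ N.cast_nonneg
    _ ≤ sideLobeBound m := le_sideLobeBound ⟨by linarith, by linarith⟩

lemma norm_cexp_two_pi_I_mul_sub_one (x : ℝ) :
    ‖cexp (2 * π * I * x) - 1‖ = 2 * |Real.sin (π * x)| := by
  have := Complex.norm_exp_I_mul_ofReal_sub_one (2 * π * x)
  push_cast at this
  rw [show 2 * (π : ℂ) * I * x = I * (2 * π * x) by ring, this, norm_mul, Real.norm_eq_abs,
    Real.norm_eq_abs, abs_two]
  ring_nf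

lemma norm_sum_cexp_two_pi_I_mul (n : ℕ) {θ : ℝ} (hθ : Real.sin (π * θ) ≠ 0) :
    ‖∑ t : Fin n, cexp (2 * π * I * θ * ((t : ℕ) + 1))‖ =
      |Real.sin (π * (n * θ))| / |Real.sin (π * θ)| := by
  set z := cexp (2 * π * I * θ)
  have hpow : ∀ k : ℕ, cexp (2 * π * I * θ * k) = z ^ k := fun k => by
    rw [← Complex.exp_nat_mul]; ring_nf
  have hz1 : z - 1 ≠ 0 := by
    rw [← norm_ne_zero_iff, norm_cexp_two_pi_I_mul_sub_one]
    exact mul_ne_zero two_ne_zero (abs_ne_zero.2 hθ)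
  have hz : ‖z‖ = 1 := by
    show ‖cexp (2 * π * I * θ)‖ = 1
    rw [show 2 * (π : ℂ) * I * θ = ((2 * π * θ : ℝ) : ℂ) * I by push_cast; ring]
    exact Complex.norm_exp_ofReal_mul_I _
  have hsum : ∑ t : Fin n, cexp (2 * π * I * θ * ((t : ℕ) + 1)) = z * ((z ^ n - 1) / (z - 1)) := by
    rw [← geom_sum_eq (sub_ne_zero.1 hz1), Finset.mul_sum, ← Fin.sum_univ_eq_sum_range]
    refine Finset.sum_congr rfl fun t _ => ?_
    rw [← pow_succ', ← hpow]; push_cast; rfl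
  have hzn : z ^ n - 1 = cexp (2 * π * I * ((n * θ : ℝ) : ℂ)) - 1 := by
    rw [← hpow]; push_cast; ring_nf
  rw [hsum, norm_mul, hz, one_mul, norm_div, hzn, norm_cexp_two_pi_I_mul_sub_one,
    norm_cexp_two_pi_I_mul_sub_one, mul_div_mul_left _ _ two_ne_zero]

lemma cexp_two_pi_I_mul_sub_int_mul_natCast (θ : ℝ) (r : ℤ) (k : ℕ) :
    cexp (2 * π * I * ((θ - r : ℝ) : ℂ) * k) = cexp (2 * π * I * θ * k) := by
  rw [show 2 * π * I * ((θ - r : ℝ) : ℂ) * k = 2 * π * I * θ * k + (-r * k : ℤ) * (2 * π * I) by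
    push_cast; ring, Complex.exp_add, Complex.exp_int_mul_two_pi_mul_I, mul_one]

lemma abs_sin_pi_mul_abs (y : ℝ) : |Real.sin (π * |y|)| = |Real.sin (π * y)| := by
  rcases abs_choice y with h | h <;> simp [h, Real.sin_neg]

/-- Jordan's inequality `2 |δ| ≤ |sin (π δ)|` for `|δ| ≤ 1 / 2`, with `δ = θ - round θ`. -/
lemma norm_sum_cexp_div_le (n : ℕ) {θ : ℝ} (hθ : θ ≠ round θ) :
    ‖∑ t : Fin n, cexp (2 * π * I * θ * ((t : ℕ) + 1))‖ / n ≤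
      π / 2 * (|Real.sin (π * |n * (θ - round θ)|)| / (π * |n * (θ - round θ)|)) := by
  set δ := θ - round θ
  rw [abs_mul, Nat.abs_cast]
  have hδ : 0 < |δ| := abs_pos.2 (sub_ne_zero.2 hθ)
  have hjordan : 2 * |δ| ≤ |Real.sin (π * δ)| := by
    have h := Real.mul_abs_le_abs_sin (x := π * δ)
      (by rw [abs_mul, abs_of_pos pi_pos]; nlinarith [abs_sub_round θ, pi_pos])
    rwa [abs_mul, abs_of_pos pi_pos, ← mul_assoc, div_mul_cancel₀ _ pi_ne_zero] at h
  have hsum : ∑ t : Fin n, cexp (2 * π * I * θ * ((t : ℕ) + 1)) =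
      ∑ t : Fin n, cexp (2 * π * I * δ * ((t + 1 : ℕ) : ℂ)) := by
    refine Finset.sum_congr rfl fun t _ => ?_
    rw [cexp_two_pi_I_mul_sub_int_mul_natCast]; push_cast; rfl
  have hsinδ : Real.sin (π * δ) ≠ 0 := by
    rw [← abs_pos]; linarith
  rw [hsum]
  simp only [Nat.cast_add, Nat.cast_one]
  rw [norm_sum_cexp_two_pi_I_mul n hsinδ, ← abs_sin_pi_mul_abs (n * δ), abs_mul, Nat.abs_cast]
  rcases n.eq_zero_or_pos with rfl | hn
  · simp
  calc |Real.sin (π * (n * |δ|))| / |Real.sin (π * δ)| / n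
      ≤ |Real.sin (π * (n * |δ|))| / (2 * |δ|) / n := by gcongr
    _ = π / 2 * (|Real.sin (π * (n * |δ|))| / (π * (n * |δ|))) := by
      field_simp

lemma norm_one_div_mul_sum_mul_cexp_le (n : ℕ) (c : ℂ) {θ : ℝ} (hθ : θ ≠ round θ) :
    ‖(1 / (n : ℂ)) * ∑ t : Fin n, c * cexp (2 * π * I * θ * ((t : ℕ) + 1))‖ ≤
      ‖c‖ * (π / 2 * (|Real.sin (π * |n * (θ - round θ)|)| / (π * |n * (θ - round θ)|))) := by
  rw [← Finset.mul_sum, mul_left_comm, norm_mul, one_div_mul_eq_div, norm_div,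
    Complex.norm_natCast]
  exact mul_le_mul_of_nonneg_left (norm_sum_cexp_div_le n hθ) (norm_nonneg c)

lemma injOn_sign_ceil {ι : Type*} {s : Finset ι} {x : ι → ℝ} {a c : ℝ} (hc : 0 < c)
    (hsep : ∀ i ∈ s, ∀ j ∈ s, i ≠ j → c ≤ |x i - x j|) :
    Set.InjOn (fun i => (decide (0 < x i), ⌈(|x i| - a) / c⌉)) s := by
  intro i hi j hj hij
  by_contra hne
  simp only [Prod.mk.injEq, decide_eq_decide] at hij
  obtain ⟨hsign, hceil⟩ := hij
  have habs : |x i - x j| = |(|x i| - |x j|)| := by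
    by_cases hpos : 0 < x i
    · rw [abs_of_pos hpos, abs_of_pos (hsign.1 hpos)]
    · have hj' : x j ≤ 0 := not_lt.1 (mt hsign.2 hpos)
      rw [abs_of_nonpos (not_lt.1 hpos), abs_of_nonpos hj', abs_sub_comm]
      ring_nf
  have hshell : |(|x i| - a) / c - (|x j| - a) / c| < 1 := by
    rw [abs_sub_lt_iff]
    constructor <;> linarith [Int.le_ceil ((|x i| - a) / c), Int.le_ceil ((|x j| - a) / c),
      Int.ceil_lt_add_one ((|x i| - a) / c), Int.ceil_lt_add_one ((|x j| - a) / c),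
      (congrArg (fun k : ℤ => (k : ℝ)) hceil : _)]
  rw [← sub_div, abs_div, abs_of_pos hc, div_lt_one hc, sub_sub_sub_cancel_right, ← habs] at hshell
  exact (hsep i hi j hj hne).not_gt hshell

lemma sum_le_card_mul_sum_of_injOn {ι σ κ : Type*} [Fintype σ] [DecidableEq σ] [DecidableEq κ]
    {s : Finset ι} {t : Finset κ} {p : ι → σ × κ} (hp : Set.InjOn p s)
    (hpt : ∀ i ∈ s, (p i).2 ∈ t) {F : κ → ℝ} (hF : ∀ k ∈ t, 0 ≤ F k) :
    ∑ i ∈ s, F (p i).2 ≤ Fintype.card σ * ∑ k ∈ t, F k := by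
  calc ∑ i ∈ s, F (p i).2 = ∑ y ∈ s.image p, F y.2 :=
      (Finset.sum_image (f := fun y => F y.2) hp).symm
    _ ≤ ∑ y ∈ Finset.univ ×ˢ t, F y.2 := by
      refine Finset.sum_le_sum_of_subset_of_nonneg ?_ fun y hy _ =>
        hF y.2 (Finset.mem_product.1 hy).2
      intro y hy
      obtain ⟨i, hi, rfl⟩ := Finset.mem_image.1 hy
      exact Finset.mem_product.2 ⟨Finset.mem_univ _, hpt i hi⟩
    _ = Fintype.card σ * ∑ k ∈ t, F k := by
      simp only [Finset.sum_product, Finset.sum_const, Finset.card_univ, nsmul_eq_mul]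

/-- `k = ⌈(y - 3g) / (2g)⌉` is the index of the shell `((2k+1) g, (2k+3) g]` containing `y`.
Rounding up makes `2 g k < y - g ≤ n / 2 - g` strict, which is what keeps `k` below the
`⌊(n - 2g - 1) / (4g)⌋` of `leakageU₁`. -/
lemma shell_index_mem_Icc {n g : ℕ} (hg : 0 < g) {y : ℝ} (hgy : g < y) (hy : y ≤ n / 2) :
    ⌈(y - 3 * g) / (2 * g)⌉ ∈ Finset.Icc (0 : ℤ) ⌊((n : ℝ) - 2 * g - 1) / (4 * g)⌋ ∧
      (((2 * ⌈(y - 3 * g) / (2 * g)⌉ + 1).toNat * g : ℕ) : ℝ) ≤ y := by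
  set k := ⌈(y - 3 * g) / (2 * g)⌉
  have hg' : (0 : ℝ) < g := by exact_mod_cast hg
  have hk : (2 * g : ℝ) * (k - 1) < y - 3 * g := by
    have := Int.ceil_lt_add_one ((y - 3 * g) / (2 * g))
    rw [← sub_lt_iff_lt_add, lt_div_iff₀ (by positivity)] at this
    linarith
  have hk0 : 0 ≤ k := by
    have : -1 < k := Int.lt_ceil.2 <| by
      rw [Int.cast_neg, Int.cast_one, lt_div_iff₀ (by positivity)]; linarith
    omega
  have hkK : 4 * (g : ℤ) * k ≤ n - 2 * g - 1 := by
    have : (4 * g * k : ℝ) < n - 2 * g := by nlinarith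
    have : 4 * (g : ℤ) * k < n - 2 * g := by exact_mod_cast this
    omega
  refine ⟨Finset.mem_Icc.2 ⟨hk0, Int.le_floor.2 ?_⟩, ?_⟩
  · rw [le_div_iff₀ (by positivity)]
    have : ((4 * g * k : ℤ) : ℝ) ≤ ((n - 2 * g - 1 : ℤ) : ℝ) := by exact_mod_cast hkK
    push_cast at this
    linarith
  · have h2k : ((2 * k + 1).toNat : ℤ) = 2 * k + 1 := Int.toNat_of_nonneg (by omega)
    have : ((2 * k + 1).toNat : ℝ) = 2 * k + 1 := by exact_mod_cast h2k
    push_cast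
    rw [this]
    nlinarith

/-- On each side of `0`, a `2g`-separated family meets each shell `((2k+1) g, (2k+3) g]` at most
once. -/
theorem sum_abs_sin_div_le_two_mul_leakageU₁ {ι : Type*} (s : Finset ι) (x : ι → ℝ) {n g : ℕ}
    (hg : 0 < g) (hx : ∀ i ∈ s, g < |x i| ∧ |x i| ≤ n / 2)
    (hsep : ∀ i ∈ s, ∀ j ∈ s, i ≠ j → 2 * g ≤ |x i - x j|) :
    ∑ i ∈ s, |Real.sin (π * |x i|)| / (π * |x i|) ≤ 2 * leakageU₁ n g := by
  have hg' : (0 : ℝ) < g := by exact_mod_cast hg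
  calc ∑ i ∈ s, |Real.sin (π * |x i|)| / (π * |x i|)
      ≤ ∑ i ∈ s, sideLobeBound ((2 * ⌈(|x i| - 3 * g) / (2 * g)⌉ + 1).toNat * g) := by
        refine Finset.sum_le_sum fun i hi => ?_
        obtain ⟨hk, hshell⟩ := shell_index_mem_Icc hg (hx i hi).1 (hx i hi).2
        refine abs_sin_pi_mul_div_le_sideLobeBound (Nat.mul_pos ?_ hg) hshell
        have := (Finset.mem_Icc.1 hk).1
        omega
    _ ≤ Fintype.card Bool * ∑ k ∈ Finset.Icc (0 : ℤ) ⌊((n : ℝ) - 2 * g - 1) / (4 * g)⌋,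
          sideLobeBound ((2 * k + 1).toNat * g) :=
        sum_le_card_mul_sum_of_injOn (F := fun k => sideLobeBound ((2 * k + 1).toNat * g))
          (injOn_sign_ceil (by positivity) hsep)
          (fun i hi => (shell_index_mem_Icc hg (hx i hi).1 (hx i hi).2).1)
          (fun _ _ => sideLobeBound_nonneg _)
    _ = 2 * leakageU₁ n g := by rw [Fintype.card_bool, leakageU₁]; norm_num

lemma inv_le_abs_sub_of_ne {T i j : ℕ} (hi : i < T) (hj : j < T) (hij : i ≠ j) (v : ℝ) (a b : ℤ) :
    (T : ℝ)⁻¹ ≤ |((i : ℝ) / T - v - a) - ((j : ℝ) / T - v - b)| := by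
  have hT : (0 : ℝ) < T := by exact_mod_cast (Nat.zero_le i).trans_lt hi
  have hm : ((i : ℤ) - j - (a - b) * T) ≠ 0 := by
    rcases lt_trichotomy (a - b) 0 with h | h | h
    · nlinarith
    · rw [h]; omega
    · nlinarith
  have h1 : (1 : ℝ) ≤ |(((i : ℤ) - j - (a - b) * T : ℤ) : ℝ)| := by
    exact_mod_cast Int.one_le_abs hm
  rw [show ((i : ℝ) / T - v - a) - ((j : ℝ) / T - v - b) =
      (((i : ℤ) - j - (a - b) * T : ℤ) : ℝ) / T by
    push_cast; field_simp; ring, abs_div, abs_of_pos hT, inv_eq_one_div]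
  gcongr

/-- For `v ∈ [0, 1/2]` and `j < T`, `j / T - v ∈ [-1/2, 1 - 1/T]` rounds to `0` or `1`. -/
lemma lt_abs_sub_round {T j : ℕ} (hj : j < T) {v ε : ℝ} (hv0 : 0 ≤ v) (hv : v ≤ 1 / 2)
    (hε : ε < (T : ℝ)⁻¹) (hjv : ε < |(j : ℝ) / T - v|) :
    ε < |((j : ℝ) / T - v) - round ((j : ℝ) / T - v)| := by
  set θ := (j : ℝ) / T - v
  have hT : (0 : ℝ) < T := by exact_mod_cast (Nat.zero_le j).trans_lt hj
  have hθ0 : -(1 / 2) ≤ θ := by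
    have : (0 : ℝ) ≤ j / T := by positivity
    linarith
  have hθ1 : θ ≤ 1 - (T : ℝ)⁻¹ := by
    have : (j : ℝ) + 1 ≤ T := by exact_mod_cast hj
    have : (j : ℝ) / T ≤ 1 - (T : ℝ)⁻¹ := by
      rw [div_le_iff₀ hT, sub_mul, inv_mul_cancel₀ hT.ne']; linarith
    linarith
  have hr0 : 0 ≤ round θ := by rw [round_eq]; exact Int.floor_nonneg.2 (by linarith)
  have hTinv := inv_pos.2 hT
  have hr1 : round θ ≤ 1 := by
    rw [round_eq, Int.floor_le_iff]; push_cast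
    linarith
  obtain hr | hr : round θ = 0 ∨ round θ = 1 := by omega
  · simpa [hr] using hjv
  · rw [hr, Int.cast_one, abs_sub_comm, abs_of_nonneg (by linarith)]
    linarith

theorem norm_sum_dft_le_pi_mul_leakageU₁ {n g T : ℕ} (hn : 0 < n) (hg : 0 < g) (hT : 0 < T)
    (hTn : (T : ℝ) < n / (2 * g))
    (b : ℕ → ℂ) {B : ℝ} (hB0 : 0 ≤ B) (hB : ∀ j < T, b j ≠ 0 → ‖b j‖ ≤ B)
    {v : ℝ} (hv0 : 0 ≤ v) (hv : v ≤ 1 / 2)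
    (hvj : ∀ j < T, b j ≠ 0 → (g : ℝ) / n < |(j : ℝ) / T - v|) :
    ‖∑ j ∈ Finset.range T, (1 / (n : ℂ)) * ∑ t : Fin n, b j *
        cexp (2 * π * I * ((j : ℝ) / T - v) * ((t : ℕ) + 1))‖ ≤ π * B * leakageU₁ n g := by
  set θ : ℕ → ℝ := fun j => (j : ℝ) / T - v
  set x : ℕ → ℝ := fun j => n * (θ j - round (θ j))
  set P := (Finset.range T).filter (fun j => b j ≠ 0)
  have hn' : (0 : ℝ) < n := by exact_mod_cast hn
  have hT' : (0 : ℝ) < T := by exact_mod_cast hT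
  have hgT : 2 * (g : ℝ) * T < n := by
    rwa [lt_div_iff₀ (by positivity), mul_comm] at hTn
  have hmemP : ∀ j ∈ P, j < T ∧ b j ≠ 0 := fun j hj => by simpa [P] using hj
  have hround : ∀ j ∈ P, (g : ℝ) / n < |θ j - round (θ j)| := fun j hj =>
    lt_abs_sub_round (hmemP j hj).1 hv0 hv
      (by rw [div_lt_iff₀ hn', inv_mul_eq_div, lt_div_iff₀ hT']; nlinarith)
      (hvj j (hmemP j hj).1 (hmemP j hj).2)
  have hx : ∀ j ∈ P, g < |x j| ∧ |x j| ≤ n / 2 := fun j hj => by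
    simp only [x, abs_mul, Nat.abs_cast]
    constructor
    · have := hround j hj; rw [div_lt_iff₀ hn'] at this; linarith
    · have := abs_sub_round (θ j); nlinarith
  have hsep : ∀ i ∈ P, ∀ j ∈ P, i ≠ j → 2 * g ≤ |x i - x j| := fun i hi j hj hij => by
    have := inv_le_abs_sub_of_ne (hmemP i hi).1 (hmemP j hj).1 hij v (round (θ i)) (round (θ j))
    simp only [x, ← mul_sub, abs_mul, Nat.abs_cast]
    calc (2 * g : ℝ) ≤ n * (T : ℝ)⁻¹ := by rw [← div_eq_mul_inv, le_div_iff₀ hT']; linarith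
      _ ≤ _ := by gcongr
  have hterm : ∀ j ∈ P, ‖(1 / (n : ℂ)) * ∑ t : Fin n, b j *
      cexp (2 * π * I * ((j : ℝ) / T - v) * ((t : ℕ) + 1))‖ ≤
        B * (π / 2 * (|Real.sin (π * |x j|)| / (π * |x j|))) := fun j hj => by
    have hθ : θ j ≠ round (θ j) :=
      sub_ne_zero.1 (abs_pos.1 ((hround j hj).trans' (div_pos (by exact_mod_cast hg) hn')))
    have hkernel := norm_one_div_mul_sum_mul_cexp_le n (b j) hθ
    simp only [θ, Complex.ofReal_sub, Complex.ofReal_div, Complex.ofReal_natCast] at hkernel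
    exact hkernel.trans (mul_le_mul_of_nonneg_right (hB j (hmemP j hj).1 (hmemP j hj).2)
      (by positivity))
  calc _ ≤ ∑ j ∈ Finset.range T, ‖(1 / (n : ℂ)) * ∑ t : Fin n, b j *
        cexp (2 * π * I * ((j : ℝ) / T - v) * ((t : ℕ) + 1))‖ := norm_sum_le _ _
    _ = ∑ j ∈ P, ‖(1 / (n : ℂ)) * ∑ t : Fin n, b j *
        cexp (2 * π * I * ((j : ℝ) / T - v) * ((t : ℕ) + 1))‖ :=
      (Finset.sum_filter_of_ne (p := fun j => b j ≠ 0) fun j _ h hb => h (by simp [hb])).symm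
    _ ≤ ∑ j ∈ P, B * (π / 2 * (|Real.sin (π * |x j|)| / (π * |x j|))) := Finset.sum_le_sum hterm
    _ ≤ B * (π / 2 * (2 * leakageU₁ n g)) := by
      rw [← Finset.mul_sum, ← Finset.mul_sum]
      gcongr
      exact sum_abs_sin_div_le_two_mul_leakageU₁ P x hg hx hsep
    _ = π * B * leakageU₁ n g := by ring

theorem leakage_bound_outside_neighborhoods_general
    (n g T : ℕ) (hn : 0 < n) (hg2 : 2 ≤ g)
    (hT : 0 < T) (hTn : (T : ℝ) < n / (2 * g))
    (b : ℕ → ℂ)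
    (μdft : ℕ → ℝ → ℂ)
    (hμdft : ∀ j v, μdft j v = (1 / (n : ℂ)) *
        ∑ t : Fin n, b j *
          Complex.exp (2 * Real.pi * Complex.I * ((j : ℝ) / T - v) * ((t : ℕ) + 1)))
    (B : ℝ) (hB : IsGreatest {x : ℝ | ∃ j < T, b j ≠ 0 ∧ x = ‖b j‖} B)
    (V : Set ℝ)
    (hV : V = Set.Icc (0 : ℝ) (1 / 2) ∩
        ⋃ j ∈ {j : ℕ | j < T ∧ b j ≠ 0},
          Set.Icc ((j : ℝ) / T - g / n) ((j : ℝ) / T + g / n)) :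
    (⨆ v ∈ Set.Icc (0 : ℝ) (1 / 2) \ V,
        ‖∑ j ∈ Finset.range T, μdft j v‖) ≤
      Real.pi * B * leakageU₁ n g := by
  have hB0 : 0 ≤ B := by
    obtain ⟨j, -, -, hj⟩ := hB.1
    exact hj ▸ norm_nonneg _
  have hbound : 0 ≤ π * B * leakageU₁ n g :=
    mul_nonneg (mul_nonneg pi_pos.le hB0) (leakageU₁_nonneg n g)
  refine Real.iSup_le (fun v => Real.iSup_le (fun hv => ?_) hbound) hbound
  obtain ⟨⟨hv0, hv2⟩, hvV⟩ := hv
  simp only [hμdft]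
  refine norm_sum_dft_le_pi_mul_leakageU₁ hn (by omega) hT hTn b hB0
    (fun j hj hbj => hB.2 ⟨j, hj, hbj, rfl⟩) hv0 hv2 fun j hj hbj => ?_
  by_contra! hclose
  rw [abs_le] at hclose
  exact hvV (hV ▸ ⟨⟨hv0, hv2⟩, Set.mem_iUnion₂.2
    ⟨j, ⟨hj, hbj⟩, by constructor <;> linarith [hclose.1, hclose.2]⟩⟩)

/-- First bound of Lemma 2 of the paper:
`sup_{v∈𝒱̄} | Σ_{j=0}^{T−1} μ̃_j(v) | ≤ π B U₁`, where `𝒱̄` is the part of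
`[0,1/2]` outside the `g/n`-neighborhoods of the present frequencies. -/
theorem leakage_bound_outside_neighborhoods
    (n g T : ℕ) (hn : 0 < n) (hg2 : 2 ≤ g) (hgn : Real.sqrt n ≤ g)
    (hT : 0 < T) (hTn : (T : ℝ) < n / (2 * g))
    (b : ℕ → ℂ)
    (hb0 : (b 0).im = 0)
    (hbconj : ∀ j, 1 ≤ j → j ≤ T - 1 → b j = starRingEnd ℂ (b (T - j)))
    (hbne : ∃ j < T, b j ≠ 0)
    (μdft : ℕ → ℝ → ℂ)
    (hμdft : ∀ j v, μdft j v = (1 / (n : ℂ)) *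
        ∑ t : Fin n, b j *
          Complex.exp (2 * Real.pi * Complex.I * ((j : ℝ) / T - v) * ((t : ℕ) + 1)))
    (B : ℝ) (hB : IsGreatest {x : ℝ | ∃ j < T, b j ≠ 0 ∧ x = ‖b j‖} B)
    (V : Set ℝ)
    (hV : V = Set.Icc (0 : ℝ) (1 / 2) ∩
        ⋃ j ∈ {j : ℕ | j < T ∧ b j ≠ 0},
          Set.Icc ((j : ℝ) / T - g / n) ((j : ℝ) / T + g / n)) :
    (⨆ v ∈ Set.Icc (0 : ℝ) (1 / 2) \ V,
        ‖∑ j ∈ Finset.range T, μdft j v‖) ≤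
      Real.pi * B * leakageU₁ n g :=
  leakage_bound_outside_neighborhoods_general n g T hn hg2 hT hTn b μdft hμdft B hB V hV
end

section
/- For every integer m ≥ 1, 1/((m + 1/2)π) ≤ A_m ≤ 1/(mπ); the sequence (A_m) is non-increasing in m; and for every integer m ≥ 2, A_{m−1} + A_{m+1} ≥ 2·A_m. -/
open Real

namespace SideLobeAux

noncomputable def F (ν : ℝ) : ℝ := |Real.sin (Real.pi * ν)| / (Real.pi * ν)

lemma abs_neg_one_zpow (n : ℤ) : |(-1 : ℝ) ^ n| = 1 := by
  rcases Int.even_or_odd n with he | ho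
  · rw [he.neg_one_zpow, abs_one]
  · rw [ho.neg_one_zpow, abs_neg, abs_one]

lemma abs_sin_shift (ν : ℝ) (n : ℤ) :
    |Real.sin (Real.pi * (ν + n))| = |Real.sin (Real.pi * ν)| := by
  have h : Real.pi * (ν + n) = Real.pi * ν + n * Real.pi := by ring
  rw [h, Real.sin_add_int_mul_pi, abs_mul, abs_neg_one_zpow, one_mul]

lemma F_le {m : ℝ} (hm : 0 < m) {ν : ℝ} (hν : m ≤ ν) : F ν ≤ 1 / (m * Real.pi) := by
  have hπ := Real.pi_pos
  have h1 : |Real.sin (Real.pi * ν)| ≤ 1 := abs_le.2 ⟨Real.neg_one_le_sin _, Real.sin_le_one _⟩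
  have h2 : F ν ≤ 1 / (Real.pi * m) := by
    apply div_le_div₀ zero_le_one h1 (by positivity)
    nlinarith
  rw [mul_comm] at h2; exact h2

/-- The inner function of the double `iSup`. -/
noncomputable def G (m : ℕ) (ν : ℝ) : ℝ :=
  ⨆ _ : ν ∈ Set.Icc (m : ℝ) ((m : ℝ) + 1), F ν

lemma sideLobeBound_eq (m : ℕ) : sideLobeBound m = ⨆ ν, G m ν := rfl

lemma G_le (m : ℕ) (hm : 1 ≤ m) (ν : ℝ) : G m ν ≤ 1 / ((m : ℝ) * Real.pi) := by
  have hm' : (0 : ℝ) < m := by exact_mod_cast hm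
  by_cases h : ν ∈ Set.Icc (m : ℝ) ((m : ℝ) + 1)
  · rw [G, ciSup_pos h]
    exact F_le hm' h.1
  · haveI : IsEmpty (ν ∈ Set.Icc (m : ℝ) ((m : ℝ) + 1)) := ⟨fun h' => h h'⟩
    rw [G, Real.iSup_of_isEmpty]
    positivity

lemma bddAbove_G (m : ℕ) (hm : 1 ≤ m) : BddAbove (Set.range (G m)) :=
  ⟨1 / ((m : ℝ) * Real.pi), by rintro x ⟨ν, rfl⟩; exact G_le m hm ν⟩

lemma upper (m : ℕ) (hm : 1 ≤ m) : sideLobeBound m ≤ 1 / ((m : ℝ) * Real.pi) := by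
  rw [sideLobeBound_eq]
  exact ciSup_le (G_le m hm)

lemma F_mem_le (m : ℕ) (hm : 1 ≤ m) {ν : ℝ} (h : ν ∈ Set.Icc (m : ℝ) ((m : ℝ) + 1)) :
    F ν ≤ sideLobeBound m := by
  rw [sideLobeBound_eq]
  have : G m ν = F ν := by rw [G, ciSup_pos h]
  rw [← this]
  exact le_ciSup (bddAbove_G m hm) ν

lemma lower (m : ℕ) (hm : 1 ≤ m) :
    1 / (((m : ℝ) + 1 / 2) * Real.pi) ≤ sideLobeBound m := by
  have hπ := Real.pi_pos
  set ν₀ : ℝ := (m : ℝ) + 1 / 2 with hν₀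
  have hmem : ν₀ ∈ Set.Icc (m : ℝ) ((m : ℝ) + 1) := ⟨by norm_num [hν₀], by norm_num [hν₀]⟩
  have hsin : |Real.sin (Real.pi * ν₀)| = 1 := by
    have h : Real.pi * ν₀ = Real.pi / 2 + (m : ℤ) * Real.pi := by push_cast [hν₀]; ring
    rw [h, Real.sin_add_int_mul_pi, Real.sin_pi_div_two, abs_mul, abs_neg_one_zpow, abs_one, one_mul]
  have hF : F ν₀ = 1 / (((m : ℝ) + 1 / 2) * Real.pi) := by
    rw [F, hsin, mul_comm]
  rw [← hF]
  exact F_mem_le m hm hmem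

lemma nonneg (m : ℕ) (hm : 1 ≤ m) : 0 ≤ sideLobeBound m := by
  refine le_trans ?_ (lower m hm)
  have hm' : (0 : ℝ) < m := by exact_mod_cast hm
  positivity

end SideLobeAux

/-- For every `m ≥ 1`, `1/((m+1/2)π) ≤ A_m ≤ 1/(mπ)`; the sequence `(A_m)` is
non-increasing; and `A_{m−1} + A_{m+1} ≥ 2 A_m` for every `m ≥ 2`. -/
theorem sideLobeBound_properties :
    (∀ m : ℕ, 1 ≤ m →
      1 / (((m : ℝ) + 1 / 2) * Real.pi) ≤ sideLobeBound m ∧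
        sideLobeBound m ≤ 1 / ((m : ℝ) * Real.pi)) ∧
    (∀ m m' : ℕ, 1 ≤ m → m ≤ m' → sideLobeBound m' ≤ sideLobeBound m) ∧
    (∀ m : ℕ, 2 ≤ m → 2 * sideLobeBound m ≤ sideLobeBound (m - 1) + sideLobeBound (m + 1)) := by
  open SideLobeAux in
  have hπ := Real.pi_pos
  refine ⟨fun m hm => ⟨SideLobeAux.lower m hm, SideLobeAux.upper m hm⟩, ?_, ?_⟩
  · -- monotonicity
    intro m m' hm hmm'
    have hm' : 1 ≤ m' := le_trans hm hmm'
    rw [SideLobeAux.sideLobeBound_eq m']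
    apply ciSup_le
    intro ν
    by_cases h : ν ∈ Set.Icc (m' : ℝ) ((m' : ℝ) + 1)
    · rw [SideLobeAux.G, ciSup_pos h]
      set d : ℕ := m' - m with hd
      have hdcast : (d : ℝ) = (m' : ℝ) - m := by
        rw [hd, Nat.cast_sub hmm']
      set ν' : ℝ := ν - d with hν'
      have hmem' : ν' ∈ Set.Icc (m : ℝ) ((m : ℝ) + 1) := by
        constructor
        · rw [hν', hdcast]; linarith [h.1]
        · rw [hν', hdcast]; linarith [h.2]
      have hnum : |Real.sin (Real.pi * ν)| = |Real.sin (Real.pi * ν')| := by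
        have : ν = ν' + (d : ℤ) := by push_cast [hν']; ring
        rw [this, SideLobeAux.abs_sin_shift]
      have hm0 : (0 : ℝ) < m := by exact_mod_cast hm
      have hν'pos : 0 < ν' := lt_of_lt_of_le hm0 hmem'.1
      have hFle : SideLobeAux.F ν ≤ SideLobeAux.F ν' := by
        rw [SideLobeAux.F, SideLobeAux.F, hnum]
        apply div_le_div_of_nonneg_left (abs_nonneg _) (by positivity)
        have : ν' ≤ ν := by rw [hν', hdcast]; have : (0:ℝ) ≤ (m':ℝ) - m := by
                              have : (m:ℝ) ≤ m' := by exact_mod_cast hmm'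
                              linarith
                            linarith
        nlinarith
      exact le_trans hFle (SideLobeAux.F_mem_le m hm hmem')
    · haveI : IsEmpty (ν ∈ Set.Icc (m' : ℝ) ((m' : ℝ) + 1)) := ⟨fun h' => h h'⟩
      rw [SideLobeAux.G, Real.iSup_of_isEmpty]
      exact SideLobeAux.nonneg m hm
  · -- convexity
    intro m hm
    have hm1 : 1 ≤ m - 1 := by omega
    have hm2 : 1 ≤ m + 1 := by omega
    have hcast : ((m - 1 : ℕ) : ℝ) = (m : ℝ) - 1 := by
      rw [Nat.cast_sub (by omega)]; norm_num
    suffices h : sideLobeBound m ≤ (sideLobeBound (m - 1) + sideLobeBound (m + 1)) / 2 by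
      linarith
    rw [SideLobeAux.sideLobeBound_eq m]
    apply ciSup_le
    intro ν
    by_cases h : ν ∈ Set.Icc (m : ℝ) ((m : ℝ) + 1)
    · rw [SideLobeAux.G, ciSup_pos h]
      have hm0 : (2 : ℝ) ≤ m := by exact_mod_cast hm
      have hν2 : (2 : ℝ) ≤ ν := le_trans hm0 h.1
      have hmemL : ν - 1 ∈ Set.Icc ((m - 1 : ℕ) : ℝ) (((m - 1 : ℕ) : ℝ) + 1) := by
        rw [hcast]; constructor <;> [linarith [h.1]; linarith [h.2]]
      have hmemR : ν + 1 ∈ Set.Icc ((m + 1 : ℕ) : ℝ) (((m + 1 : ℕ) : ℝ) + 1) := by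
        push_cast; constructor <;> [linarith [h.1]; linarith [h.2]]
      have hL : SideLobeAux.F (ν - 1) ≤ sideLobeBound (m - 1) :=
        SideLobeAux.F_mem_le (m - 1) hm1 hmemL
      have hR : SideLobeAux.F (ν + 1) ≤ sideLobeBound (m + 1) :=
        SideLobeAux.F_mem_le (m + 1) hm2 hmemR
      have hnumL : |Real.sin (Real.pi * (ν - 1))| = |Real.sin (Real.pi * ν)| := by
        have : ν - 1 = ν + ((-1 : ℤ) : ℝ) := by push_cast; ring
        rw [this, SideLobeAux.abs_sin_shift]
      have hnumR : |Real.sin (Real.pi * (ν + 1))| = |Real.sin (Real.pi * ν)| := by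
        have : ν + 1 = ν + ((1 : ℤ) : ℝ) := by push_cast; ring
        rw [this, SideLobeAux.abs_sin_shift]
      set s : ℝ := |Real.sin (Real.pi * ν)| with hs
      have hs0 : 0 ≤ s := abs_nonneg _
      have hkey : 2 * SideLobeAux.F ν ≤ SideLobeAux.F (ν - 1) + SideLobeAux.F (ν + 1) := by
        rw [SideLobeAux.F, SideLobeAux.F, SideLobeAux.F, hnumL, hnumR, ← hs]
        have ha : (0 : ℝ) < Real.pi * ν := by positivity
        have hb : (0 : ℝ) < Real.pi * (ν - 1) := by nlinarith
        have hc : (0 : ℝ) < Real.pi * (ν + 1) := by positivity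
        rw [div_add_div _ _ hb.ne' hc.ne', mul_div_assoc', div_le_div_iff₀ ha (by positivity)]
        have hπ2 : (0 : ℝ) ≤ s * (Real.pi * Real.pi) := by positivity
        nlinarith
      have hF : SideLobeAux.F ν ≤ (SideLobeAux.F (ν - 1) + SideLobeAux.F (ν + 1)) / 2 := by
        linarith
      refine le_trans hF ?_
      have := add_le_add hL hR
      linarith
    · haveI : IsEmpty (ν ∈ Set.Icc (m : ℝ) ((m : ℝ) + 1)) := ⟨fun h' => h h'⟩
      rw [SideLobeAux.G, Real.iSup_of_isEmpty]
      have h1 := SideLobeAux.nonneg (m - 1) hm1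
      have h2 := SideLobeAux.nonneg (m + 1) hm2
      linarith
end
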